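/- Suppose F is nonempty, p_max ≥ q_max, and {A, B} is a bipartition of O with Q(A) ≥ p_max and Q(B) ≥ p_max. Then there exists a feasible schedule with makespan exactly P(F) + Q(O); moreover every feasible schedule has makespan at least P(F) + Q(O), so this schedule is optimal. -/

import Mathlib

open Finset

noncomputable section

/-- Processing time of a job: `p` on flow-shop jobs, `q` otherwise. -/
def jobTime {J : Type*} [DecidableEq J] (F : Finset J) (p q : J → ℝ) (j : J) : ℝ :=
  if j ∈ F then p j else q j

/-- Feasibility of a schedule given by start times `S j i` of job `j` on machine `i`
(machines `M1, M2, M3` are machines `0, 1, 2`):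
all start times are nonnegative, on each machine the open processing intervals of
distinct jobs are pairwise disjoint, for each job the open processing intervals on the
three machines are pairwise disjoint, and each flow-shop job goes through
`M1`, `M2`, `M3` in this order. -/
def Feasible {J : Type*} [DecidableEq J] (F O : Finset J) (p q : J → ℝ)
    (S : J → Fin 3 → ℝ) : Prop :=
  (∀ j ∈ F ∪ O, ∀ i : Fin 3, 0 ≤ S j i) ∧
  (∀ i : Fin 3, ∀ j ∈ F ∪ O, ∀ k ∈ F ∪ O, j ≠ k →
    S j i + jobTime F p q j ≤ S k i ∨ S k i + jobTime F p q k ≤ S j i) ∧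
  (∀ j ∈ F ∪ O, ∀ i i' : Fin 3, i ≠ i' →
    S j i + jobTime F p q j ≤ S j i' ∨ S j i' + jobTime F p q j ≤ S j i) ∧
  (∀ j ∈ F, S j 0 + p j ≤ S j 1 ∧ S j 1 + p j ≤ S j 2)

/-- Makespan: supremum of all completion times of the jobs of `F ∪ O`. -/
def makespan {J : Type*} [DecidableEq J] (F O : Finset J) (p q : J → ℝ)
    (S : J → Fin 3 → ℝ) : ℝ :=
  sSup {x : ℝ | ∃ j ∈ F ∪ O, ∃ i : Fin 3, x = S j i + jobTime F p q j}

/-!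
On machine `M1` the jobs occupy pairwise disjoint intervals inside `[0, makespan]`, so their
lengths add up to at most the makespan; this is the lower bound `P(F) + Q(O)`.

For the matching schedule, cut the jobs into three blocks `F`, `B`, `A` and let machine `i`
process the blocks in the cyclic order rotated by `i` (a Latin square), each block back to back
in one fixed order of its jobs. No machine is ever idle. The three operations of a job sit in
the same relative place of three different slots, so they are separated by at least one whole
other block; every job has length at most `p_max` and every block has length at least `p_max`,
so they do not overlap. Finally `F` takes the first, second and third slot on `M1`, `M2`, `M3`,
which gives the flow-shop order.
-/

section PrefixSum

variable {ι α : Type*} [LinearOrder α] (κ : ι → α) (T : Finset ι) (w : ι → ℝ)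

def prefixSum (j : ι) : ℝ :=
  ∑ k ∈ T with κ k < κ j, w k

variable {κ T w}

lemma prefixSum_nonneg (hw : ∀ k ∈ T, 0 ≤ w k) (j : ι) : 0 ≤ prefixSum κ T w j :=
  sum_nonneg fun k hk => hw k (mem_filter.1 hk).1

lemma prefixSum_add_le_of_subset [DecidableEq ι] {j : ι} {U : Finset ι} (hw : ∀ k ∈ U, 0 ≤ w k)
    (hsub : insert j (T.filter fun k => κ k < κ j) ⊆ U) :
    prefixSum κ T w j + w j ≤ ∑ k ∈ U, w k := by
  rw [prefixSum, add_comm, ← sum_insert (by simp)]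
  exact sum_le_sum_of_subset_of_nonneg hsub fun k hk _ => hw k hk

lemma prefixSum_add_le_sum (hw : ∀ k ∈ T, 0 ≤ w k) {j : ι} (hj : j ∈ T) :
    prefixSum κ T w j + w j ≤ ∑ k ∈ T, w k := by
  classical
  exact prefixSum_add_le_of_subset hw (insert_subset hj (filter_subset _ _))

lemma prefixSum_add_le_of_lt (hw : ∀ k ∈ T, 0 ≤ w k) {j k : ι} (hj : j ∈ T)
    (hjk : κ j < κ k) : prefixSum κ T w j + w j ≤ prefixSum κ T w k := by
  classical
  refine prefixSum_add_le_of_subset (fun x hx => hw x (mem_filter.1 hx).1) ?_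
  intro x hx
  rcases mem_insert.1 hx with rfl | hx
  · exact mem_filter.2 ⟨hj, hjk⟩
  · exact mem_filter.2 ⟨(mem_filter.1 hx).1, (mem_filter.1 hx).2.trans hjk⟩

lemma prefixSum_separated (hκ : Function.Injective κ) (hw : ∀ k ∈ T, 0 ≤ w k) {j k : ι}
    (hj : j ∈ T) (hk : k ∈ T) (hjk : j ≠ k) :
    prefixSum κ T w j + w j ≤ prefixSum κ T w k ∨ prefixSum κ T w k + w k ≤ prefixSum κ T w j :=
  (lt_or_gt_of_ne (hκ.ne hjk)).imp (prefixSum_add_le_of_lt hw hj) (prefixSum_add_le_of_lt hw hk)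

end PrefixSum

lemma sum_le_of_pairwise_separated {ι : Type*} [DecidableEq ι] {T : Finset ι} {s t : ι → ℝ}
    {M : ℝ} (hs : ∀ j ∈ T, 0 ≤ s j) (ht : ∀ j ∈ T, 0 < t j)
    (hsep : ∀ j ∈ T, ∀ k ∈ T, j ≠ k → s j + t j ≤ s k ∨ s k + t k ≤ s j)
    (hM : ∀ j ∈ T, s j + t j ≤ M) (hM0 : 0 ≤ M) : ∑ j ∈ T, t j ≤ M := by
  induction T using Finset.induction_on_max_value s generalizing M with
  | empty => simpa using hM0
  | insert a T haT hmax ih =>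
    have ha := mem_insert_self a T
    have hT : T ⊆ insert a T := subset_insert a T
    -- The interval starting last lies after all the others.
    have hbefore : ∀ j ∈ T, s j + t j ≤ s a := by
      intro j hj
      refine (hsep j (hT hj) a ha (ne_of_mem_of_not_mem hj haT)).resolve_right fun h => ?_
      linarith [hmax j hj, ht a ha]
    have := ih (fun j hj => hs j (hT hj)) (fun j hj => ht j (hT hj))
      (fun j hj k hk => hsep j (hT hj) k (hT hk)) hbefore (hs a ha)
    rw [sum_insert haT]
    linarith [hM a ha]

/- On machine `i`, block `b` is processed in position `b + i` (mod 3), right after the blocks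
in earlier positions: the three machines run the blocks in the cyclic orders of a Latin square. -/
def cyclicOffset (L : Fin 3 → ℝ) (b i : Fin 3) : ℝ :=
  prefixSum (· + i) univ L b

section CyclicOffset

variable {L : Fin 3 → ℝ}

lemma cyclicOffset_nonneg (hL : ∀ c, 0 ≤ L c) (b i : Fin 3) : 0 ≤ cyclicOffset L b i :=
  prefixSum_nonneg (fun c _ => hL c) b

lemma cyclicOffset_add_le_sum (hL : ∀ c, 0 ≤ L c) (b i : Fin 3) :
    cyclicOffset L b i + L b ≤ ∑ c, L c :=
  prefixSum_add_le_sum (fun c _ => hL c) (mem_univ b)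

lemma cyclicOffset_separated_of_ne (hL : ∀ c, 0 ≤ L c) {b b' : Fin 3} (hb : b ≠ b') (i : Fin 3) :
    cyclicOffset L b i + L b ≤ cyclicOffset L b' i ∨
      cyclicOffset L b' i + L b' ≤ cyclicOffset L b i :=
  prefixSum_separated (add_left_injective i) (fun c _ => hL c) (mem_univ b) (mem_univ b') hb

lemma cyclicOffset_separated (hL : ∀ c, 0 ≤ L c) {b i i' : Fin 3} {x : ℝ}
    (hx : ∀ c ≠ b, x ≤ L c) (hi : i ≠ i') :
    cyclicOffset L b i + x ≤ cyclicOffset L b i' ∨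
      cyclicOffset L b i' + x ≤ cyclicOffset L b i := by
  have h1 := hx (b + 1) (by fin_cases b <;> decide)
  have h2 := hx (b + 2) (by fin_cases b <;> decide)
  have := hL 0; have := hL 1; have := hL 2
  fin_cases b <;> fin_cases i <;> fin_cases i' <;>
    simp [cyclicOffset, prefixSum, sum_filter, Fin.sum_univ_three] at hi h1 h2 ⊢ <;>
    first | (left; linarith) | (right; linarith)

lemma cyclicOffset_zero : cyclicOffset L 0 = ![0, L 2, L 2 + L 1] := by
  funext i
  fin_cases i <;> simp [cyclicOffset, prefixSum, sum_filter, Fin.sum_univ_three, add_comm]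

end CyclicOffset

section CyclicSchedule

variable {J : Type*} (X : Fin 3 → Finset J) (β : J → Fin 3) (t : J → ℝ)

def blockLength (b : Fin 3) : ℝ :=
  ∑ j ∈ X b, t j

/- Inside a block the jobs run back to back in one fixed order of `J`, the same on every
machine, so a job's operations differ only by the offsets of its block. -/
def cyclicSchedule (j : J) (i : Fin 3) : ℝ :=
  cyclicOffset (blockLength X t) (β j) i + prefixSum embeddingToCardinal (X (β j)) t j

variable {X β t}

lemma blockLength_nonneg (ht : ∀ b, ∀ k ∈ X b, 0 ≤ t k) (b : Fin 3) : 0 ≤ blockLength X t b :=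
  sum_nonneg (ht b)

lemma prefixSum_add_le_blockLength (ht : ∀ b, ∀ k ∈ X b, 0 ≤ t k) {b : Fin 3} {j : J}
    (hj : j ∈ X b) : prefixSum embeddingToCardinal (X b) t j + t j ≤ blockLength X t b :=
  prefixSum_add_le_sum (ht b) hj

lemma cyclicSchedule_nonneg (ht : ∀ b, ∀ k ∈ X b, 0 ≤ t k) (j : J) (i : Fin 3) :
    0 ≤ cyclicSchedule X β t j i :=
  add_nonneg (cyclicOffset_nonneg (blockLength_nonneg ht) _ i) (prefixSum_nonneg (ht _) j)

lemma cyclicSchedule_add_le_sum (ht : ∀ b, ∀ k ∈ X b, 0 ≤ t k) {j : J} (hj : j ∈ X (β j))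
    (i : Fin 3) : cyclicSchedule X β t j i + t j ≤ ∑ b, blockLength X t b := by
  have := prefixSum_add_le_blockLength ht hj
  have := cyclicOffset_add_le_sum (blockLength_nonneg ht) (β j) i
  rw [cyclicSchedule]
  linarith

lemma cyclicSchedule_separated_of_ne (ht : ∀ b, ∀ k ∈ X b, 0 ≤ t k) {j k : J}
    (hj : j ∈ X (β j)) (hk : k ∈ X (β k)) (hjk : j ≠ k) (i : Fin 3) :
    cyclicSchedule X β t j i + t j ≤ cyclicSchedule X β t k i ∨
      cyclicSchedule X β t k i + t k ≤ cyclicSchedule X β t j i := by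
  rw [cyclicSchedule, cyclicSchedule]
  by_cases hb : β j = β k
  · rw [hb] at hj ⊢
    rcases prefixSum_separated embeddingToCardinal.injective (ht _) hj hk hjk with h | h
    · left; linarith
    · right; linarith
  · have := prefixSum_add_le_blockLength ht hj
    have := prefixSum_add_le_blockLength ht hk
    have := prefixSum_nonneg (κ := embeddingToCardinal) (ht (β j)) j
    have := prefixSum_nonneg (κ := embeddingToCardinal) (ht (β k)) k
    rcases cyclicOffset_separated_of_ne (blockLength_nonneg ht) hb i with h | h
    · left; linarith
    · right; linarith

lemma cyclicSchedule_separated (ht : ∀ b, ∀ k ∈ X b, 0 ≤ t k) {j : J}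
    (hshort : ∀ b ≠ β j, t j ≤ blockLength X t b) {i i' : Fin 3} (hi : i ≠ i') :
    cyclicSchedule X β t j i + t j ≤ cyclicSchedule X β t j i' ∨
      cyclicSchedule X β t j i' + t j ≤ cyclicSchedule X β t j i := by
  rw [cyclicSchedule, cyclicSchedule]
  rcases cyclicOffset_separated (blockLength_nonneg ht) hshort hi with h | h
  · left; linarith
  · right; linarith

lemma cyclicSchedule_flow {j : J} (hj : β j = 0) (h1 : t j ≤ blockLength X t 1)
    (h2 : t j ≤ blockLength X t 2) :
    cyclicSchedule X β t j 0 + t j ≤ cyclicSchedule X β t j 1 ∧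
      cyclicSchedule X β t j 1 + t j ≤ cyclicSchedule X β t j 2 := by
  simp only [cyclicSchedule, hj, cyclicOffset_zero]
  constructor <;> simp <;> linarith

end CyclicSchedule

section Makespan

variable {J : Type*} [DecidableEq J] {F O : Finset J} {p q : J → ℝ}

lemma jobTime_of_mem {j : J} (hj : j ∈ F) : jobTime F p q j = p j :=
  if_pos hj

lemma jobTime_of_notMem {j : J} (hj : j ∉ F) : jobTime F p q j = q j :=
  if_neg hj

lemma sum_jobTime_union (hdisj : Disjoint F O) :
    ∑ j ∈ F ∪ O, jobTime F p q j = (∑ j ∈ F, p j) + ∑ j ∈ O, q j := by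
  rw [sum_union hdisj, sum_congr rfl fun j hj => jobTime_of_mem hj,
    sum_congr rfl fun j hj => jobTime_of_notMem (disjoint_right.1 hdisj hj)]

variable {S : J → Fin 3 → ℝ}

lemma completion_le_makespan {j : J} (hj : j ∈ F ∪ O) (i : Fin 3) :
    S j i + jobTime F p q j ≤ makespan F O p q S := by
  refine le_csSup (Set.Finite.bddAbove ?_) ⟨j, hj, i, rfl⟩
  refine (((F ∪ O) ×ˢ (univ : Finset (Fin 3))).image
    fun x => S x.1 x.2 + jobTime F p q x.1).finite_toSet.subset ?_
  rintro _ ⟨k, hk, i', rfl⟩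
  exact mem_image.2 ⟨(k, i'), mem_product.2 ⟨hk, mem_univ i'⟩, rfl⟩

lemma makespan_le {M : ℝ} (hne : (F ∪ O).Nonempty)
    (h : ∀ j ∈ F ∪ O, ∀ i, S j i + jobTime F p q j ≤ M) : makespan F O p q S ≤ M := by
  obtain ⟨j, hj⟩ := hne
  refine csSup_le ⟨_, j, hj, 0, rfl⟩ ?_
  rintro _ ⟨k, hk, i, rfl⟩
  exact h k hk i

lemma sum_jobTime_le_makespan (hS : Feasible F O p q S)
    (ht : ∀ j ∈ F ∪ O, 0 < jobTime F p q j) :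
    ∑ j ∈ F ∪ O, jobTime F p q j ≤ makespan F O p q S := by
  obtain ⟨hS0, hmachine, -, -⟩ := hS
  refine sum_le_of_pairwise_separated (fun j hj => hS0 j hj 0) ht (hmachine 0)
    (fun j hj => completion_le_makespan hj 0) (Real.sSup_nonneg ?_)
  rintro _ ⟨j, hj, i, rfl⟩
  exact add_nonneg (hS0 j hj i) (ht j hj).le

end Makespan

lemma feasible_cyclicSchedule {J : Type*} [DecidableEq J] {F O : Finset J} {p q : J → ℝ}
    {X : Fin 3 → Finset J} {β : J → Fin 3} (hmem : ∀ j ∈ F ∪ O, j ∈ X (β j))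
    (hβF : ∀ j ∈ F, β j = 0) (ht : ∀ b, ∀ k ∈ X b, 0 ≤ jobTime F p q k)
    (hshort : ∀ j ∈ F ∪ O, ∀ b ≠ β j, jobTime F p q j ≤ blockLength X (jobTime F p q) b) :
    Feasible F O p q (cyclicSchedule X β (jobTime F p q)) := by
  refine ⟨fun j _ i => cyclicSchedule_nonneg ht j i,
    fun i j hj k hk hjk => cyclicSchedule_separated_of_ne ht (hmem j hj) (hmem k hk) hjk i,
    fun j hj i i' hi => cyclicSchedule_separated ht (hshort j hj) hi, fun j hj => ?_⟩
  have hjF := mem_union_left O hj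
  have := cyclicSchedule_flow (X := X) (hβF j hj)
    (hshort j hjF 1 (by simp [hβF j hj])) (hshort j hjF 2 (by simp [hβF j hj]))
  rwa [jobTime_of_mem hj] at this

lemma mem_blocks_of_mem_union {J : Type*} [DecidableEq J] {F A B : Finset J} {j : J}
    (hj : j ∈ F ∪ (A ∪ B)) :
    j ∈ (![F, B, A] : Fin 3 → Finset J) (if j ∈ F then 0 else if j ∈ B then 1 else 2) := by
  by_cases hF : j ∈ F
  · simp [hF]
  by_cases hB : j ∈ B
  · simp [hF, hB]
  simpa [hF, hB] using hj

theorem exists_feasible_completion_le {J : Type*} [DecidableEq J] {F O A B : Finset J}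
    {p q : J → ℝ} {m : ℝ} (hdisj : Disjoint F O) (hp : ∀ j ∈ F, 0 ≤ p j)
    (hq : ∀ j ∈ O, 0 ≤ q j) (hAB : A ∪ B = O) (hABdisj : Disjoint A B)
    (hpm : ∀ j ∈ F, p j ≤ m) (hqm : ∀ j ∈ O, q j ≤ m) (hmF : m ≤ ∑ j ∈ F, p j)
    (hmA : m ≤ ∑ j ∈ A, q j) (hmB : m ≤ ∑ j ∈ B, q j) :
    ∃ S : J → Fin 3 → ℝ, Feasible F O p q S ∧
      ∀ j ∈ F ∪ O, ∀ i, S j i + jobTime F p q j ≤ (∑ j ∈ F, p j) + ∑ j ∈ O, q j := by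
  set t := jobTime F p q
  set X : Fin 3 → Finset J := ![F, B, A]
  set β : J → Fin 3 := fun j => if j ∈ F then 0 else if j ∈ B then 1 else 2
  have hAO : A ⊆ O := hAB ▸ subset_union_left
  have hBO : B ⊆ O := hAB ▸ subset_union_right
  have htF : ∀ j ∈ F, t j = p j := fun j hj => jobTime_of_mem hj
  have htO : ∀ j ∈ O, t j = q j := fun j hj => jobTime_of_notMem (disjoint_right.1 hdisj hj)
  have hmem : ∀ j ∈ F ∪ O, j ∈ X (β j) := fun j hj => mem_blocks_of_mem_union (hAB ▸ hj)
  have ht : ∀ b, ∀ k ∈ X b, 0 ≤ t k := by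
    intro b k hk
    fin_cases b
    · simpa [htF k hk] using hp k hk
    · simpa [htO k (hBO hk)] using hq k (hBO hk)
    · simpa [htO k (hAO hk)] using hq k (hAO hk)
  have hL : blockLength X t = ![∑ j ∈ F, p j, ∑ j ∈ B, q j, ∑ j ∈ A, q j] := by
    funext b
    fin_cases b
    · exact sum_congr rfl htF
    · exact sum_congr rfl fun j hj => htO j (hBO hj)
    · exact sum_congr rfl fun j hj => htO j (hAO hj)
  have hshort : ∀ j ∈ F ∪ O, ∀ b, t j ≤ blockLength X t b := by
    intro j hj b
    have htm : t j ≤ m := by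
      rcases mem_union.1 hj with hj | hj
      · exact (htF j hj).trans_le (hpm j hj)
      · exact (htO j hj).trans_le (hqm j hj)
    fin_cases b <;> simp [hL] <;> linarith
  refine ⟨cyclicSchedule X β t,
    feasible_cyclicSchedule hmem (fun j hj => if_pos hj) ht fun j hj b _ => hshort j hj b,
    fun j hj i => (cyclicSchedule_add_le_sum ht (hmem j hj) i).trans_eq ?_⟩
  rw [Fin.sum_univ_three, hL, ← hAB, sum_union hABdisj]
  simp only [Matrix.cons_val]
  ring

/-- If `p_max ≥ q_max` and `{A, B}` is a bipartition of `O` with `Q(A) ≥ p_max` and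
`Q(B) ≥ p_max`, then there is a feasible schedule of makespan exactly `P(F) + Q(O)`,
and every feasible schedule has makespan at least `P(F) + Q(O)`. -/
theorem stmt2 {J : Type*} [DecidableEq J] (F O : Finset J) (p q : J → ℝ)
    (hdisj : Disjoint F O)
    (hp : ∀ j ∈ F, 0 < p j) (hq : ∀ j ∈ O, 0 < q j)
    (hF : F.Nonempty) (hO : O.Nonempty)
    (hpq : O.sup' hO q ≤ F.sup' hF p)
    (A B : Finset J) (hABunion : A ∪ B = O) (hABdisj : Disjoint A B)
    (hA : F.sup' hF p ≤ ∑ j ∈ A, q j) (hB : F.sup' hF p ≤ ∑ j ∈ B, q j) :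
    (∃ S : J → Fin 3 → ℝ, Feasible F O p q S ∧
        makespan F O p q S = (∑ j ∈ F, p j) + ∑ j ∈ O, q j) ∧
    (∀ S : J → Fin 3 → ℝ, Feasible F O p q S →
        (∑ j ∈ F, p j) + (∑ j ∈ O, q j) ≤ makespan F O p q S) := by
  have ht : ∀ j ∈ F ∪ O, 0 < jobTime F p q j := by
    intro j hj
    rcases mem_union.1 hj with hj | hj
    · exact (jobTime_of_mem hj).symm ▸ hp j hj
    · exact (jobTime_of_notMem (disjoint_right.1 hdisj hj)).symm ▸ hq j hj
  have lower : ∀ S, Feasible F O p q S → (∑ j ∈ F, p j) + (∑ j ∈ O, q j) ≤ makespan F O p q S :=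
    fun S hS => sum_jobTime_union hdisj ▸ sum_jobTime_le_makespan hS ht
  have hpmax : F.sup' hF p ≤ ∑ j ∈ F, p j := by
    obtain ⟨f, hf, hfmax⟩ := exists_mem_eq_sup' hF p
    exact hfmax ▸ single_le_sum (fun j hj => (hp j hj).le) hf
  obtain ⟨S, hS, hle⟩ := exists_feasible_completion_le hdisj (fun j hj => (hp j hj).le)
    (fun j hj => (hq j hj).le) hABunion hABdisj (fun j hj => le_sup' p hj)
    (fun j hj => (le_sup' q hj).trans hpq) hpmax hA hB
  exact ⟨⟨S, hS, (makespan_le (hF.mono subset_union_left) hle).antisymm (lower S hS)⟩, lower⟩
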